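/- arXiv:1601.00238 — 4 statements merged into one kernel-verified Lean document; each statement's English description precedes it below -/
import Mathlib

section
/- Let T, T' ∈ ℝ^{m×k} be matrices with ‖T e_i‖ ≤ c and ‖T' e_i‖ ≤ c for all i, and suppose every column satisfies ‖(T − T') e_i‖ ≤ √m · (ξ/2) for some ξ > 0. Let Y be a nonempty subset of the closed unit ball of ℝ^k and let x ∈ ℝ^m with ‖x‖ ≤ r. Then |inf_{y∈Y} ‖x − T y‖² − inf_{y∈Y} ‖x − T' y‖²| ≤ (r + c k) √m k ξ. -/
private lemma col_abs_le (k : ℕ) (y : EuclideanSpace ℝ (Fin k)) (i : Fin k) : |y i| ≤ ‖y‖ := by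
  rw [EuclideanSpace.norm_eq]
  have h : |y i| = Real.sqrt (‖y i‖^2) := by rw [Real.sqrt_sq_eq_abs]; simp
  rw [h]
  exact Real.sqrt_le_sqrt
    (Finset.single_le_sum (f := fun j => ‖y j‖^2) (fun j _ => sq_nonneg _) (Finset.mem_univ i))

private lemma decomp (k : ℕ) (y : EuclideanSpace ℝ (Fin k)) :
    y = ∑ i, y i • EuclideanSpace.single i 1 := by
  have := ((EuclideanSpace.basisFun (Fin k) ℝ).toBasis.sum_repr y).symm
  simpa [EuclideanSpace.basisFun_repr, EuclideanSpace.basisFun_apply] using this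

private lemma col_bound {m k : ℕ} (S : EuclideanSpace ℝ (Fin k) →ₗ[ℝ] EuclideanSpace ℝ (Fin m))
    {b : ℝ} (hS : ∀ i : Fin k, ‖S (EuclideanSpace.single i 1)‖ ≤ b)
    {y : EuclideanSpace ℝ (Fin k)} (hy : ‖y‖ ≤ 1) : ‖S y‖ ≤ k * b := by
  have h1 : S y = ∑ i, y i • S (EuclideanSpace.single i 1) := by
    conv_lhs => rw [decomp k y]
    simp [map_sum]
  rw [h1]
  calc ‖∑ i, y i • S (EuclideanSpace.single i 1)‖
      ≤ ∑ i : Fin k, ‖y i • S (EuclideanSpace.single i 1)‖ := norm_sum_le _ _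
    _ ≤ ∑ _i : Fin k, 1 * b := by
        refine Finset.sum_le_sum fun i _ => ?_
        rw [norm_smul, Real.norm_eq_abs]
        exact mul_le_mul ((col_abs_le k y i).trans hy) (hS i) (norm_nonneg _) zero_le_one
    _ = k * b := by simp

/-- Lipschitz estimate for the reconstruction error of `k`-dimensional coding schemes. -/
theorem loss_lipschitz (m k : ℕ) (c r ξ : ℝ) (hc : 0 ≤ c) (hr : 0 ≤ r) (hξ : 0 < ξ)
    (T T' : EuclideanSpace ℝ (Fin k) →ₗ[ℝ] EuclideanSpace ℝ (Fin m))
    (hT : ∀ i : Fin k, ‖T (EuclideanSpace.single i 1)‖ ≤ c)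
    (hT' : ∀ i : Fin k, ‖T' (EuclideanSpace.single i 1)‖ ≤ c)
    (hd : ∀ i : Fin k,
      ‖T (EuclideanSpace.single i 1) - T' (EuclideanSpace.single i 1)‖ ≤ Real.sqrt m * (ξ / 2))
    (Y : Set (EuclideanSpace ℝ (Fin k))) (hYne : Y.Nonempty)
    (hY : Y ⊆ Metric.closedBall 0 1)
    (x : EuclideanSpace ℝ (Fin m)) (hx : ‖x‖ ≤ r) :
    |sInf {z : ℝ | ∃ y ∈ Y, z = ‖x - T y‖ ^ 2} -
      sInf {z : ℝ | ∃ y ∈ Y, z = ‖x - T' y‖ ^ 2}|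
      ≤ (r + c * k) * Real.sqrt m * k * ξ := by
  set M : ℝ := (r + c * k) * Real.sqrt m * k * ξ with hM
  -- pointwise bound
  have key : ∀ y ∈ Y, |‖x - T y‖ ^ 2 - ‖x - T' y‖ ^ 2| ≤ M := by
    intro y hy
    have hy1 : ‖y‖ ≤ 1 := by simpa using hY hy
    have hTy : ‖T y‖ ≤ k * c := col_bound T hT hy1
    have hT'y : ‖T' y‖ ≤ k * c := col_bound T' hT' hy1
    have hdy : ‖(T - T') y‖ ≤ k * (Real.sqrt m * (ξ / 2)) := by
      refine col_bound (T - T') (fun i => ?_) hy1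
      simpa using hd i
    have hid : ‖x - T y‖ ^ 2 - ‖x - T' y‖ ^ 2 =
        inner ℝ ((x - T y) + (x - T' y)) ((x - T y) - (x - T' y)) := by
      rw [inner_sub_right, inner_add_left, inner_add_left, real_inner_self_eq_norm_sq,
        real_inner_self_eq_norm_sq, real_inner_comm (x - T' y) (x - T y)]
      ring
    rw [hid]
    have habs := abs_real_inner_le_norm ((x - T y) + (x - T' y)) ((x - T y) - (x - T' y))
    have hsum : ‖(x - T y) + (x - T' y)‖ ≤ 2 * r + 2 * (k * c) := by
      calc ‖(x - T y) + (x - T' y)‖ ≤ ‖x - T y‖ + ‖x - T' y‖ := norm_add_le _ _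
        _ ≤ (‖x‖ + ‖T y‖) + (‖x‖ + ‖T' y‖) := add_le_add (norm_sub_le _ _) (norm_sub_le _ _)
        _ ≤ (r + k * c) + (r + k * c) := add_le_add (add_le_add hx hTy) (add_le_add hx hT'y)
        _ = 2 * r + 2 * (k * c) := by ring
    have hdiff : ‖(x - T y) - (x - T' y)‖ ≤ k * (Real.sqrt m * (ξ / 2)) := by
      have : (x - T y) - (x - T' y) = -((T - T') y) := by
        simp [LinearMap.sub_apply]
      rw [this, norm_neg]; exact hdy
    have hnn1 : (0:ℝ) ≤ 2 * r + 2 * (k * c) := by positivity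
    calc |(inner ℝ ((x - T y) + (x - T' y)) ((x - T y) - (x - T' y)) : ℝ)|
        ≤ ‖(x - T y) + (x - T' y)‖ * ‖(x - T y) - (x - T' y)‖ := habs
      _ ≤ (2 * r + 2 * (k * c)) * (k * (Real.sqrt m * (ξ / 2))) :=
          mul_le_mul hsum hdiff (norm_nonneg _) hnn1
      _ = M := by rw [hM]; ring
  have hMnn : 0 ≤ M := le_trans (abs_nonneg _) (key hYne.choose hYne.choose_spec)
  set A := {z : ℝ | ∃ y ∈ Y, z = ‖x - T y‖ ^ 2}
  set B := {z : ℝ | ∃ y ∈ Y, z = ‖x - T' y‖ ^ 2}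
  have hAne : A.Nonempty := ⟨_, hYne.choose, hYne.choose_spec, rfl⟩
  have hBne : B.Nonempty := ⟨_, hYne.choose, hYne.choose_spec, rfl⟩
  have hAbdd : BddBelow A := ⟨0, fun z ⟨y, _, hz⟩ => hz ▸ sq_nonneg _⟩
  have hBbdd : BddBelow B := ⟨0, fun z ⟨y, _, hz⟩ => hz ▸ sq_nonneg _⟩
  have h1 : sInf A - M ≤ sInf B := by
    refine le_csInf hBne fun b hb => ?_
    obtain ⟨y, hy, rfl⟩ := hb
    have hA : sInf A ≤ ‖x - T y‖ ^ 2 := csInf_le hAbdd ⟨y, hy, rfl⟩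
    have hk := key y hy
    rw [abs_le] at hk
    linarith
  have h2 : sInf B - M ≤ sInf A := by
    refine le_csInf hAne fun a ha => ?_
    obtain ⟨y, hy, rfl⟩ := ha
    have hB : sInf B ≤ ‖x - T' y‖ ^ 2 := csInf_le hBbdd ⟨y, hy, rfl⟩
    have hk := key y hy
    rw [abs_le] at hk
    linarith
  rw [abs_sub_le_iff]
  exact ⟨by linarith, by linarith⟩
end

section
/- Let x ∈ ℝ^m_{≥0} with ‖x‖ ≤ r and let T ∈ ℝ^{m×k}_{≥0} have columns T_1, …, T_k each of Euclidean norm exactly 1. If y ∈ ℝ^k_{≥0} is a minimizer of h(y) = ‖x − Σ_{i=1}^k y_i T_i‖² over the non-negative orthant, then ‖y_{opt}‖-image bound holds: ‖Σ_{i=1}^k y_i T_i‖ ≤ r; in particular, since the columns are non-negative unit vectors, ‖y‖ ≤ ‖Σ_i y_i T_i‖ ≤ r. -/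
open RealInnerProductSpace


/-- Normalization lemma for NMF: a non-negative minimizer `y` of
`h(y) = ‖x - ∑ i, y i • T_i‖²` over the non-negative orthant satisfies
`‖∑ i, y i • T_i‖ ≤ r` and `‖y‖ ≤ r`. -/
theorem nmf_minimizer_bound (m k : ℕ) (r : ℝ) (hr : 0 < r)
    (x : EuclideanSpace ℝ (Fin m)) (hx0 : ∀ j, 0 ≤ x j) (hx : ‖x‖ ≤ r)
    (Tc : Fin k → EuclideanSpace ℝ (Fin m))
    (hTc0 : ∀ i j, 0 ≤ Tc i j) (hTc1 : ∀ i, ‖Tc i‖ = 1)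
    (y : Fin k → ℝ) (hy0 : ∀ i, 0 ≤ y i)
    (hmin : ∀ z : Fin k → ℝ, (∀ i, 0 ≤ z i) →
      ‖x - ∑ i, y i • Tc i‖ ^ 2 ≤ ‖x - ∑ i, z i • Tc i‖ ^ 2) :
    ‖∑ i, y i • Tc i‖ ≤ r ∧ Real.sqrt (∑ i, (y i) ^ 2) ≤ r := by
  classical
  set s : EuclideanSpace ℝ (Fin m) := ∑ i, y i • Tc i with hs
  -- inner products of nonnegative vectors are nonnegative
  have hTTnn : ∀ i j, (0:ℝ) ≤ ⟪Tc i, Tc j⟫ := by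
    intro i j
    rw [PiLp.inner_apply]
    refine Finset.sum_nonneg fun l _ => ?_
    simpa using mul_nonneg (hTc0 j l) (hTc0 i l)
  have hxs_nn : (0:ℝ) ≤ ⟪x, s⟫ := by
    rw [PiLp.inner_apply]
    refine Finset.sum_nonneg fun l _ => ?_
    have hsl : 0 ≤ s l := by
      have : s l = ∑ i, y i * Tc i l := by
        rw [hs]
        induction (Finset.univ : Finset (Fin k)) using Finset.induction with
        | empty => simp
        | insert _ _ hnot ih =>
          rw [Finset.sum_insert hnot, Finset.sum_insert hnot, ← ih]
          rfl
      rw [this]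
      exact Finset.sum_nonneg fun i _ => mul_nonneg (hy0 i) (hTc0 i l)
    simpa using mul_nonneg hsl (hx0 l)
  -- First claim: ‖s‖ ≤ r
  have h1 : ‖s‖ ≤ r := by
    by_contra hcon
    push_neg at hcon
    have hspos : (0:ℝ) < ‖s‖ := lt_trans hr hcon
    have hn : (0:ℝ) < ‖s‖ ^ 2 := by positivity
    set c : ℝ := ⟪x, s⟫ with hc
    set n : ℝ := ‖s‖ ^ 2 with hndef
    have hcn : c < n := by
      have h2 : c ≤ ‖x‖ * ‖s‖ := real_inner_le_norm x s
      have h3 : ‖x‖ * ‖s‖ ≤ r * ‖s‖ := by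
        apply mul_le_mul_of_nonneg_right hx (norm_nonneg s)
      have h4 : r * ‖s‖ < ‖s‖ * ‖s‖ := by
        apply mul_lt_mul_of_pos_right hcon (lt_trans hr hcon)
      calc c ≤ ‖x‖ * ‖s‖ := h2
        _ ≤ r * ‖s‖ := h3
        _ < ‖s‖ * ‖s‖ := h4
        _ = n := by rw [hndef]; ring
    set t : ℝ := c / n with ht
    have ht0 : 0 ≤ t := div_nonneg hxs_nn (le_of_lt hn)
    have htn : t * n = c := div_mul_cancel₀ c (ne_of_gt hn)
    have hz0 : ∀ i, 0 ≤ t * y i := fun i => mul_nonneg ht0 (hy0 i)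
    have hzsum : ∑ i, (t * y i) • Tc i = t • s := by
      rw [hs, Finset.smul_sum]
      simp [smul_smul]
    have hkey := hmin (fun i => t * y i) hz0
    simp only [hzsum] at hkey
    have e1 : ‖x - s‖ ^ 2 = ‖x‖ ^ 2 - 2 * c + n := by
      rw [@norm_sub_sq_real]
    have e2 : ‖x - t • s‖ ^ 2 = ‖x‖ ^ 2 - 2 * (t * c) + t ^ 2 * n := by
      rw [@norm_sub_sq_real, real_inner_smul_right, norm_smul]
      rw [hndef]
      have : |t| = t := abs_of_nonneg ht0
      rw [Real.norm_eq_abs, this, hc]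
      ring
    rw [e1, e2] at hkey
    nlinarith [sq_nonneg (n - c), htn, hn, hcn]
  -- Second claim
  have hsn : (∑ i, (y i) ^ 2) ≤ ‖s‖ ^ 2 := by
    have hexp : ‖s‖ ^ 2 = ∑ i, ∑ j, y i * (y j * ⟪Tc i, Tc j⟫) := by
      rw [← real_inner_self_eq_norm_sq, hs]
      simp only [sum_inner, inner_sum, real_inner_smul_left, real_inner_smul_right]
      exact Finset.sum_congr rfl fun i _ => Finset.sum_congr rfl fun j _ => by
        rw [real_inner_comm]
    rw [hexp]
    apply Finset.sum_le_sum
    intro i _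
    have hdiag : y i ^ 2 = y i * (y i * ⟪Tc i, Tc i⟫) := by
      rw [real_inner_self_eq_norm_sq, hTc1 i]
      ring
    rw [hdiag]
    exact Finset.single_le_sum
      (fun j _ => mul_nonneg (hy0 i) (mul_nonneg (hy0 j) (hTTnn i j)))
      (Finset.mem_univ i)
  refine ⟨h1, ?_⟩
  calc Real.sqrt (∑ i, (y i) ^ 2) ≤ Real.sqrt (‖s‖ ^ 2) := Real.sqrt_le_sqrt hsn
    _ = ‖s‖ := by rw [Real.sqrt_sq (norm_nonneg s)]
    _ ≤ r := h1
end

section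
/- For all real x ≥ 0, (1 + x) · log(1 + x) ≥ x²/(2 + 2x/3) + x. -/
open Real Set

private lemma log_ge_aux (x : ℝ) (hx : 0 ≤ x) :
    2 * x / (2 + x) ≤ Real.log (1 + x) := by
  set f : ℝ → ℝ := fun x => Real.log (1 + x) - 2 * x / (2 + x) with hf
  have key : ∀ y : ℝ, 0 ≤ y → HasDerivAt f
      (1 / (1 + y) - 4 / (2 + y) ^ 2) y := by
    intro y hy
    have h1 : (1 : ℝ) + y ≠ 0 := by positivity
    have h2 : (2 : ℝ) + y ≠ 0 := by positivity
    have hlog : HasDerivAt (fun z : ℝ => Real.log (1 + z)) (1 / (1 + y)) y := by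
      have := (Real.hasDerivAt_log h1).comp y ((hasDerivAt_id y).const_add 1)
      simpa [Function.comp_def] using this
    have hrat : HasDerivAt (fun z : ℝ => 2 * z / (2 + z)) (4 / (2 + y) ^ 2) y := by
      have hnum : HasDerivAt (fun z : ℝ => 2 * z) 2 y := by
        simpa using (hasDerivAt_id y).const_mul 2
      have hden : HasDerivAt (fun z : ℝ => 2 + z) 1 y :=
        (hasDerivAt_id y).const_add 2
      have := hnum.div hden h2
      refine this.congr_deriv ?_
      ring
    exact hlog.sub hrat
  have hmono : MonotoneOn f (Ici (0 : ℝ)) := by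
    apply monotoneOn_of_deriv_nonneg (convex_Ici 0)
    · exact fun y hy => ((key y hy).continuousAt).continuousWithinAt
    · intro y hy
      rw [interior_Ici, mem_Ioi] at hy
      exact ((key y hy.le).differentiableAt).differentiableWithinAt
    · intro y hy
      rw [interior_Ici, mem_Ioi] at hy
      rw [(key y hy.le).deriv]
      have h1 : (0:ℝ) < 1 + y := by linarith
      have h2 : (0:ℝ) < 2 + y := by linarith
      rw [sub_nonneg, div_le_div_iff₀ (by positivity) h1]
      nlinarith [sq_nonneg y]
  have h0 : f 0 = 0 := by simp [hf]
  have := hmono (self_mem_Ici) (mem_Ici.mpr hx) hx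
  rw [h0] at this
  simpa [hf, sub_nonneg] using this

/-- For `x ≥ 0`, `(1 + x) log(1 + x) ≥ x²/(2 + 2x/3) + x`. -/
theorem bennett_log_ineq (x : ℝ) (hx : 0 ≤ x) :
    x ^ 2 / (2 + 2 * x / 3) + x ≤ (1 + x) * Real.log (1 + x) := by
  set g : ℝ → ℝ := fun x => (1 + x) * Real.log (1 + x) - x ^ 2 / (2 + 2 * x / 3) - x
    with hg
  have key : ∀ y : ℝ, 0 ≤ y → HasDerivAt g
      (Real.log (1 + y) - (4 * y + 2 * y ^ 2 / 3) / (2 + 2 * y / 3) ^ 2) y := by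
    intro y hy
    have h1 : (1 : ℝ) + y ≠ 0 := by positivity
    have h2 : (2 : ℝ) + 2 * y / 3 ≠ 0 := by positivity
    have hlog : HasDerivAt (fun z : ℝ => Real.log (1 + z)) (1 / (1 + y)) y := by
      have := (Real.hasDerivAt_log h1).comp y ((hasDerivAt_id y).const_add 1)
      simpa [Function.comp_def] using this
    have hmul : HasDerivAt (fun z : ℝ => (1 + z) * Real.log (1 + z))
        (Real.log (1 + y) + 1) y := by
      have hid : HasDerivAt (fun z : ℝ => 1 + z) 1 y := (hasDerivAt_id y).const_add 1
      have := hid.mul hlog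
      refine this.congr_deriv ?_
      rw [mul_one_div_cancel h1, one_mul]
    have hrat : HasDerivAt (fun z : ℝ => z ^ 2 / (2 + 2 * z / 3))
        ((4 * y + 2 * y ^ 2 / 3) / (2 + 2 * y / 3) ^ 2) y := by
      have hnum : HasDerivAt (fun z : ℝ => z ^ 2) (2 * y) y := by
        simpa using hasDerivAt_pow 2 y
      have hden : HasDerivAt (fun z : ℝ => 2 + 2 * z / 3) (2 / 3) y := by
        have : HasDerivAt (fun z : ℝ => 2 + 2 * z / 3) (0 + 2 * 1 / 3) y :=
          (hasDerivAt_const y 2).add (((hasDerivAt_id y).const_mul 2).div_const 3)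
        simpa using this
      have := hnum.div hden h2
      refine this.congr_deriv ?_
      ring
    have := (hmul.sub hrat).sub (hasDerivAt_id y)
    refine this.congr_deriv ?_
    ring
  have hmono : MonotoneOn g (Ici (0 : ℝ)) := by
    apply monotoneOn_of_deriv_nonneg (convex_Ici 0)
    · exact fun y hy => ((key y hy).continuousAt).continuousWithinAt
    · intro y hy
      rw [interior_Ici, mem_Ioi] at hy
      exact ((key y hy.le).differentiableAt).differentiableWithinAt
    · intro y hy
      rw [interior_Ici, mem_Ioi] at hy
      rw [(key y hy.le).deriv]
      have hl := log_ge_aux y hy.le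
      have h2 : (0:ℝ) < 2 + y := by linarith
      have h3 : (0:ℝ) < 2 + 2 * y / 3 := by linarith
      have hr : (4 * y + 2 * y ^ 2 / 3) / (2 + 2 * y / 3) ^ 2 ≤ 2 * y / (2 + y) := by
        rw [div_le_div_iff₀ (by positivity) h2]
        nlinarith [sq_nonneg y, hy.le]
      linarith
  have h0 : g 0 = 0 := by simp [hg]
  have := hmono (self_mem_Ici) (mem_Ici.mpr hx) hx
  rw [h0] at this
  have : 0 ≤ (1 + x) * Real.log (1 + x) - x ^ 2 / (2 + 2 * x / 3) - x := this
  linarith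
end

section
/- Let T, T' ∈ ℝ^{m×k} with ‖T e_i‖ ≤ c, ‖T' e_i‖ ≤ c and ‖(T−T')e_i‖ ≤ √m ξ/2 for all i; let 2 ≤ p < ∞, 1/p + 1/q = 1, Y = {y ∈ ℝ^k : ‖y‖_p ≤ s}, and ‖x‖ ≤ r. Then |inf_{y∈Y}‖x − Ty‖² − inf_{y∈Y}‖x − T'y‖²| ≤ (r s + c s² k^{1−1/p}) √m ξ k^{1−1/p}. -/
/-- Sparse-coding Lipschitz estimate for the reconstruction error. -/
theorem sparse_loss_lipschitz (m k : ℕ) (c r s p q ξ : ℝ) (hc : 0 ≤ c) (hr : 0 ≤ r)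
    (hs : 0 ≤ s) (hξ : 0 < ξ) (hp : 2 ≤ p) (hpq : 1 / p + 1 / q = 1)
    (T T' : EuclideanSpace ℝ (Fin k) →ₗ[ℝ] EuclideanSpace ℝ (Fin m))
    (hT : ∀ i : Fin k, ‖T (EuclideanSpace.single i 1)‖ ≤ c)
    (hT' : ∀ i : Fin k, ‖T' (EuclideanSpace.single i 1)‖ ≤ c)
    (hd : ∀ i : Fin k,
      ‖T (EuclideanSpace.single i 1) - T' (EuclideanSpace.single i 1)‖ ≤ Real.sqrt m * ξ / 2)
    (x : EuclideanSpace ℝ (Fin m)) (hx : ‖x‖ ≤ r) :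
    |sInf {z : ℝ | ∃ y : EuclideanSpace ℝ (Fin k),
        (∑ i, |y i| ^ p) ^ (1 / p) ≤ s ∧ z = ‖x - T y‖ ^ 2} -
      sInf {z : ℝ | ∃ y : EuclideanSpace ℝ (Fin k),
        (∑ i, |y i| ^ p) ^ (1 / p) ≤ s ∧ z = ‖x - T' y‖ ^ 2}|
      ≤ (r * s + c * s ^ 2 * (k : ℝ) ^ (1 - 1 / p)) * Real.sqrt m * ξ * (k : ℝ) ^ (1 - 1 / p) := by
  have hp1 : 1 < p := lt_of_lt_of_le one_lt_two hp
  have hp0 : 0 < p := lt_trans one_pos hp1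
  have hpq' : Real.HolderConjugate p q := Real.holderConjugate_iff.mpr ⟨hp1, by
    rw [inv_eq_one_div, inv_eq_one_div]; exact hpq⟩
  have hq1 : 1 / q = 1 - 1 / p := by linarith
  set K : ℝ := (k : ℝ) ^ (1 - 1 / p) with hK
  have hK0 : 0 ≤ K := Real.rpow_nonneg (Nat.cast_nonneg k) _
  have hm0 : 0 ≤ Real.sqrt m := Real.sqrt_nonneg m
  -- Hölder: ℓ¹ norm bounded by ℓᵖ norm
  have hl1 : ∀ y : EuclideanSpace ℝ (Fin k), (∑ i, |y i| ^ p) ^ (1 / p) ≤ s →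
      ∑ i, |y i| ≤ s * K := by
    intro y hy
    have h := Real.inner_le_Lp_mul_Lq (Finset.univ : Finset (Fin k))
      (fun i => |y i|) (fun _ => 1) hpq'
    simp only [mul_one, abs_abs, abs_one, Real.one_rpow] at h
    have hkq : ((∑ _i : Fin k, (1 : ℝ)) : ℝ) ^ (1 / q) = K := by
      rw [Finset.sum_const, Finset.card_univ, Fintype.card_fin, nsmul_eq_mul, mul_one, hq1]
    rw [hkq] at h
    refine h.trans ?_
    exact mul_le_mul_of_nonneg_right hy hK0
  -- norm of applying a map with column bounds
  have happ : ∀ (S : EuclideanSpace ℝ (Fin k) →ₗ[ℝ] EuclideanSpace ℝ (Fin m)) (b : ℝ),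
      (∀ i, ‖S (EuclideanSpace.single i 1)‖ ≤ b) → ∀ y : EuclideanSpace ℝ (Fin k),
      ‖S y‖ ≤ b * ∑ i, |y i| := by
    intro S b hb y
    have hdec : ∑ i, y i • EuclideanSpace.single i (1 : ℝ) = y := by
      have := (EuclideanSpace.basisFun (Fin k) ℝ).sum_repr y
      simpa [EuclideanSpace.basisFun_apply, EuclideanSpace.basisFun_repr] using this
    calc ‖S y‖ = ‖∑ i, y i • S (EuclideanSpace.single i 1)‖ := by
          conv_lhs => rw [← hdec]
          rw [map_sum]; simp [map_smul]
      _ ≤ ∑ i, ‖y i • S (EuclideanSpace.single i 1)‖ := norm_sum_le _ _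
      _ ≤ ∑ i, |y i| * b := by
          refine Finset.sum_le_sum fun i _ => ?_
          rw [norm_smul, Real.norm_eq_abs]
          exact mul_le_mul_of_nonneg_left (hb i) (abs_nonneg _)
      _ = b * ∑ i, |y i| := by rw [← Finset.sum_mul, mul_comm]
  set B : ℝ := (r * s + c * s ^ 2 * K) * Real.sqrt m * ξ * K with hB
  -- key pointwise estimate
  have key : ∀ y : EuclideanSpace ℝ (Fin k), (∑ i, |y i| ^ p) ^ (1 / p) ≤ s →
      |‖x - T y‖ ^ 2 - ‖x - T' y‖ ^ 2| ≤ B := by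
    intro y hy
    set L : ℝ := ∑ i, |y i| with hL
    have hL0 : 0 ≤ L := Finset.sum_nonneg fun i _ => abs_nonneg _
    have hLK : L ≤ s * K := hl1 y hy
    have h1 : ‖T y‖ ≤ c * L := happ T c hT y
    have h2 : ‖T' y‖ ≤ c * L := happ T' c hT' y
    have h3 : ‖(T' - T) y‖ ≤ Real.sqrt m * ξ / 2 * L := by
      refine happ (T' - T) _ ?_ y
      intro i
      simpa [norm_sub_rev] using hd i
    have ha : ‖x - T y‖ ≤ r + c * L := by
      calc ‖x - T y‖ ≤ ‖x‖ + ‖T y‖ := norm_sub_le _ _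
        _ ≤ r + c * L := add_le_add hx h1
    have hb' : ‖x - T' y‖ ≤ r + c * L := by
      calc ‖x - T' y‖ ≤ ‖x‖ + ‖T' y‖ := norm_sub_le _ _
        _ ≤ r + c * L := add_le_add hx h2
    have hdiff : |‖x - T y‖ - ‖x - T' y‖| ≤ Real.sqrt m * ξ / 2 * L := by
      refine (abs_norm_sub_norm_le _ _).trans ?_
      have : x - T y - (x - T' y) = (T' - T) y := by
        simp [LinearMap.sub_apply]
      rw [this]; exact h3
    have hfac : ‖x - T y‖ ^ 2 - ‖x - T' y‖ ^ 2
        = (‖x - T y‖ - ‖x - T' y‖) * (‖x - T y‖ + ‖x - T' y‖) := by ring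
    rw [hfac, abs_mul]
    have hsum0 : 0 ≤ ‖x - T y‖ + ‖x - T' y‖ := by positivity
    have hsum : |‖x - T y‖ + ‖x - T' y‖| ≤ 2 * (r + c * L) := by
      rw [abs_of_nonneg hsum0]; linarith
    calc |‖x - T y‖ - ‖x - T' y‖| * |‖x - T y‖ + ‖x - T' y‖|
        ≤ (Real.sqrt m * ξ / 2 * L) * (2 * (r + c * L)) := by
          refine mul_le_mul hdiff hsum (abs_nonneg _) ?_
          positivity
      _ = Real.sqrt m * ξ * L * (r + c * L) := by ring
      _ ≤ Real.sqrt m * ξ * (s * K) * (r + c * (s * K)) := by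
          refine mul_le_mul (mul_le_mul_of_nonneg_left hLK (by positivity))
            (add_le_add (le_refl r) (mul_le_mul_of_nonneg_left hLK hc)) (by positivity) (by positivity)
      _ = B := by rw [hB]; ring
  have hB0 : 0 ≤ B := by
    have := key 0 (by
      simp [Real.zero_rpow (ne_of_gt hp0), Real.zero_rpow (one_div_ne_zero hp0.ne'), Real.zero_rpow (inv_ne_zero hp0.ne'), hs])
    exact le_trans (abs_nonneg _) this
  set S₁ := {z : ℝ | ∃ y : EuclideanSpace ℝ (Fin k),
      (∑ i, |y i| ^ p) ^ (1 / p) ≤ s ∧ z = ‖x - T y‖ ^ 2} with hS₁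
  set S₂ := {z : ℝ | ∃ y : EuclideanSpace ℝ (Fin k),
      (∑ i, |y i| ^ p) ^ (1 / p) ≤ s ∧ z = ‖x - T' y‖ ^ 2} with hS₂
  have hzero : ((∑ i, |(0 : EuclideanSpace ℝ (Fin k)) i| ^ p) ^ (1 / p) : ℝ) ≤ s := by
    simp [Real.zero_rpow (ne_of_gt hp0), Real.zero_rpow (one_div_ne_zero hp0.ne'), Real.zero_rpow (inv_ne_zero hp0.ne'), hs]
  have hne₁ : S₁.Nonempty := ⟨‖x - T 0‖ ^ 2, 0, hzero, rfl⟩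
  have hne₂ : S₂.Nonempty := ⟨‖x - T' 0‖ ^ 2, 0, hzero, rfl⟩
  have hbdd₁ : BddBelow S₁ := ⟨0, fun z hz => by
    obtain ⟨y, _, rfl⟩ := hz; positivity⟩
  have hbdd₂ : BddBelow S₂ := ⟨0, fun z hz => by
    obtain ⟨y, _, rfl⟩ := hz; positivity⟩
  rw [abs_sub_le_iff]
  constructor
  · rw [sub_le_iff_le_add, add_comm, ← sub_le_iff_le_add]
    apply le_csInf hne₂
    rintro z ⟨y, hy, rfl⟩
    have h1 : sInf S₁ ≤ ‖x - T y‖ ^ 2 := csInf_le hbdd₁ ⟨y, hy, rfl⟩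
    have h2 := key y hy
    rw [abs_le] at h2
    linarith
  · rw [sub_le_iff_le_add, add_comm, ← sub_le_iff_le_add]
    apply le_csInf hne₁
    rintro z ⟨y, hy, rfl⟩
    have h1 : sInf S₂ ≤ ‖x - T' y‖ ^ 2 := csInf_le hbdd₂ ⟨y, hy, rfl⟩
    have h2 := key y hy
    rw [abs_le] at h2
    linarith
end
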